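/- The set X = {0,1,4,5,10,11,12,14,15,16,19,20,21,22,25,26,29,30} has length set L(X) = {2,3,4} in P_{fin,0}(ℕ₀). -/
import Mathlib


open Pointwise

set_option maxRecDepth 100000
set_option maxHeartbeats 1000000

/-- `X` is an atom (indecomposable element) of the monoid `P_{fin,0}(ℕ)` of finite
subsets of ℕ containing 0 under sumset addition. -/
def IsAtomP (X : Finset ℕ) : Prop :=
  0 ∈ X ∧ X ≠ {0} ∧
    ∀ A B : Finset ℕ, 0 ∈ A → 0 ∈ B → X = A + B → A = {0} ∨ B = {0}

/-- The length set of `X` in `P_{fin,0}(ℕ)`: the set of `n` such that `X` is a sum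
of `n` atoms. -/
def LengthSet (X : Finset ℕ) : Set ℕ :=
  {n | ∃ l : Multiset (Finset ℕ), Multiset.card l = n ∧ (∀ U ∈ l, IsAtomP U) ∧ l.sum = X}

/-- `X` is relatively cancellative in `P_{fin,0}(ℕ)`. -/
def RelCancel (X : Finset ℕ) : Prop :=
  ∀ B C D : Finset ℕ, 0 ∈ B → 0 ∈ C → 0 ∈ D → X = B + C → X = B + D → C = D

/-- `C` and `D` are relatively prime in `P_{fin,0}(ℕ)`: their only common divisor is `{0}`. -/
def RelPrime (C D : Finset ℕ) : Prop :=
  ∀ T : Finset ℕ, 0 ∈ T → (∃ C' : Finset ℕ, 0 ∈ C' ∧ C = T + C') →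
    (∃ D' : Finset ℕ, 0 ∈ D' ∧ D = T + D') → T = {0}

/-! ### Auxiliary material -/

def XX : Finset ℕ := {0, 1, 4, 5, 10, 11, 12, 14, 15, 16, 19, 20, 21, 22, 25, 26, 29, 30}

def YY : Finset ℕ := {4, 10, 11, 14, 15, 19, 20, 21, 25, 29}

/-- cofactor candidate -/
def comp (S A : Finset ℕ) : Finset ℕ := S.filter (fun b => ∀ a ∈ A, a + b ∈ S)

lemma subset_of_decomp_left {S A B : Finset ℕ} (h : S = A + B) (hB : 0 ∈ B) : A ⊆ S := by
  intro a ha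
  have : a + 0 ∈ A + B := Finset.add_mem_add ha hB
  simpa [← h] using this

lemma subset_of_decomp_right {S A B : Finset ℕ} (h : S = A + B) (hA : 0 ∈ A) : B ⊆ S := by
  intro b hb
  have : 0 + b ∈ A + B := Finset.add_mem_add hA hb
  simpa [← h] using this

lemma atom_of_check (S : Finset ℕ) (h0 : 0 ∈ S) (hne : S ≠ {0})
    (hc : ∀ A ∈ S.powerset, 0 ∈ A → A ≠ {0} → A + comp S A = S → comp S A = {0}) :
    IsAtomP S := by
  refine ⟨h0, hne, fun A B hA hB hEq => ?_⟩
  by_contra hcon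
  push_neg at hcon
  obtain ⟨hA1, hB1⟩ := hcon
  have hAS : A ⊆ S := subset_of_decomp_left hEq hB
  have hBc : B ⊆ comp S A := by
    intro b hb
    refine Finset.mem_filter.2 ⟨subset_of_decomp_right hEq hA hb, fun a ha => ?_⟩
    exact hEq ▸ Finset.add_mem_add ha hb
  have hsum : A + comp S A = S := by
    apply Finset.Subset.antisymm
    · intro x hx
      obtain ⟨a, ha, b, hb, rfl⟩ := Finset.mem_add.1 hx
      exact (Finset.mem_filter.1 hb).2 a ha
    · calc S = A + B := hEq
        _ ⊆ A + comp S A := Finset.add_subset_add_left hBc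
  have := hc A (Finset.mem_powerset.2 hAS) hA hA1 hsum
  have : B = {0} := by
    apply Finset.Subset.antisymm
    · exact this ▸ hBc
    · simpa [Finset.singleton_subset_iff] using hB
  exact hB1 this

lemma atom1 : IsAtomP {0, 1} := atom_of_check _ (by decide) (by decide) (by decide)
lemma atom4 : IsAtomP {0, 4} := atom_of_check _ (by decide) (by decide) (by decide)
lemma atom10 : IsAtomP {0, 10} := atom_of_check _ (by decide) (by decide) (by decide)
lemma atom1011 : IsAtomP {0, 10, 11} := atom_of_check _ (by decide) (by decide) (by decide)
lemma atom1115 : IsAtomP {0, 11, 15} := atom_of_check _ (by decide) (by decide) (by decide)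
lemma atomB : IsAtomP {0, 4, 10, 11, 15, 19} :=
  atom_of_check _ (by decide) (by decide) (by decide)
lemma atomA : IsAtomP {0, 1, 4, 5, 10, 11, 15, 19} :=
  atom_of_check _ (by decide) (by decide) (by decide)

lemma zero_mem_msum (l : Multiset (Finset ℕ)) (h : ∀ U ∈ l, 0 ∈ U) : 0 ∈ l.sum := by
  induction l using Multiset.induction with
  | empty => simpa using Finset.zero_mem_zero
  | cons a t ih =>
    rw [Multiset.sum_cons]
    have : (0 : ℕ) + 0 ∈ a + t.sum :=
      Finset.add_mem_add (h a (Multiset.mem_cons_self a t)) (ih fun U hU => h U (Multiset.mem_cons_of_mem hU))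
    simpa using this

lemma exists_one_mem (l : Multiset (Finset ℕ)) (h1 : 1 ∈ l.sum) : ∃ V ∈ l, 1 ∈ V := by
  induction l using Multiset.induction with
  | empty => simp at h1
  | cons a t ih =>
    rw [Multiset.sum_cons] at h1
    obtain ⟨x, hx, y, hy, hxy⟩ := Finset.mem_add.1 h1
    have hx01 : x = 0 ∨ x = 1 := by omega
    rcases hx01 with rfl | rfl
    · have : y = 1 := by omega
      subst this
      obtain ⟨V, hV, hV1⟩ := ih hy
      exact ⟨V, Multiset.mem_cons_of_mem hV, hV1⟩
    · exact ⟨a, Multiset.mem_cons_self a t, hx⟩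

lemma atom_pos_mem {U : Finset ℕ} (h : IsAtomP U) : ∃ u ∈ U, u ≠ 0 := by
  by_contra hcon
  push_neg at hcon
  have : U ⊆ {0} := fun u hu => by simpa using hcon u hu
  rcases Finset.subset_singleton_iff.1 this with rfl | h'
  · exact absurd h.1 (by simp)
  · exact h.2.1 h'

lemma memY {u : ℕ} (hu : u ∈ XX) (hu1 : u + 1 ∈ XX) (h0 : u ≠ 0) : u ∈ YY := by
  revert hu1 h0
  fin_cases hu <;> decide

lemma core :
    ∀ a ∈ YY, ∀ b ∈ YY, ∀ c ∈ YY, ∀ d ∈ YY,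
      ¬(a + b ∈ XX ∧ a + b + 1 ∈ XX ∧ a + c ∈ XX ∧ a + c + 1 ∈ XX ∧ b + c ∈ XX ∧
        b + c + 1 ∈ XX ∧ a + b + c ∈ XX ∧ a + b + c + 1 ∈ XX ∧ a + d ∈ XX ∧ b + d ∈ XX ∧
        c + d ∈ XX ∧ a + b + d ∈ XX ∧ a + b + d + 1 ∈ XX ∧ a + c + d ∈ XX ∧
        a + c + d + 1 ∈ XX ∧ b + c + d ∈ XX ∧ b + c + d + 1 ∈ XX) := by decide

lemma exists_cons_of_card_pos {α : Type*} {t : Multiset α} (h : 1 ≤ Multiset.card t) :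
    ∃ U t', t = U ::ₘ t' := by
  have hne : t ≠ 0 := by intro h0; rw [h0] at h; simp at h
  rcases Multiset.exists_mem_of_ne_zero hne with ⟨U, hU⟩
  exact ⟨U, Multiset.exists_cons_of_mem hU⟩

lemma not_ge5 (l : Multiset (Finset ℕ)) (hat : ∀ U ∈ l, IsAtomP U)
    (hs : l.sum = XX) (hc : 5 ≤ Multiset.card l) : False := by
  -- find the atom containing 1
  obtain ⟨V, hVl, hV1⟩ := exists_one_mem l (by rw [hs]; decide)
  obtain ⟨t, rfl⟩ := Multiset.exists_cons_of_mem hVl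
  -- extract four more atoms
  have hct : 4 ≤ Multiset.card t := by simp at hc; omega
  obtain ⟨U2, t2, rfl⟩ : ∃ U t', t = U ::ₘ t' := exists_cons_of_card_pos (by omega)
  have hct2 : 3 ≤ Multiset.card t2 := by simp at hct; omega
  obtain ⟨U3, t3, rfl⟩ : ∃ U t', t2 = U ::ₘ t' := exists_cons_of_card_pos (by omega)
  have hct3 : 2 ≤ Multiset.card t3 := by simp at hct2; omega
  obtain ⟨U4, t4, rfl⟩ : ∃ U t', t3 = U ::ₘ t' := exists_cons_of_card_pos (by omega)
  have hct4 : 1 ≤ Multiset.card t4 := by simp at hct3; omega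
  obtain ⟨U5, t5, rfl⟩ : ∃ U t', t4 = U ::ₘ t' := exists_cons_of_card_pos (by omega)
  -- atom facts
  have hVat : IsAtomP V := hat V (by simp)
  have h2at : IsAtomP U2 := hat U2 (by simp)
  have h3at : IsAtomP U3 := hat U3 (by simp)
  have h4at : IsAtomP U4 := hat U4 (by simp)
  have h5at : IsAtomP U5 := hat U5 (by simp)
  have h0V : (0:ℕ) ∈ V := hVat.1
  have h02 : (0:ℕ) ∈ U2 := h2at.1
  have h03 : (0:ℕ) ∈ U3 := h3at.1
  have h04 : (0:ℕ) ∈ U4 := h4at.1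
  have h05 : (0:ℕ) ∈ U5 := h5at.1
  obtain ⟨u2, hu2, hu2n⟩ := atom_pos_mem h2at
  obtain ⟨u3, hu3, hu3n⟩ := atom_pos_mem h3at
  obtain ⟨u4, hu4, hu4n⟩ := atom_pos_mem h4at
  obtain ⟨u5, hu5, hu5n⟩ := atom_pos_mem h5at
  have h0R : (0:ℕ) ∈ t5.sum := by
    apply zero_mem_msum
    intro U hU
    exact (hat U (by simp [hU])).1
  have hXeq : XX = V + (U2 + (U3 + (U4 + (U5 + t5.sum)))) := by
    rw [← hs]; simp [Multiset.sum_cons]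
  have key : ∀ {a b c d e f : ℕ}, a ∈ V → b ∈ U2 → c ∈ U3 → d ∈ U4 → e ∈ U5 →
      f ∈ t5.sum → a + (b + (c + (d + (e + f)))) ∈ XX := fun ha hb hc hd he hf =>
    hXeq ▸ Finset.add_mem_add ha (Finset.add_mem_add hb (Finset.add_mem_add hc
      (Finset.add_mem_add hd (Finset.add_mem_add he hf))))
  -- derived memberships
  have m2 : u2 ∈ XX := by simpa using key h0V hu2 h03 h04 h05 h0R
  have m3 : u3 ∈ XX := by simpa using key h0V h02 hu3 h04 h05 h0R
  have m4 : u4 ∈ XX := by simpa using key h0V h02 h03 hu4 h05 h0R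
  have m5 : u5 ∈ XX := by simpa using key h0V h02 h03 h04 hu5 h0R
  have m2' : u2 + 1 ∈ XX := by
    have := key hV1 hu2 h03 h04 h05 h0R; simpa [Nat.add_comm] using this
  have m3' : u3 + 1 ∈ XX := by
    have := key hV1 h02 hu3 h04 h05 h0R; simpa [Nat.add_comm] using this
  have m4' : u4 + 1 ∈ XX := by
    have := key hV1 h02 h03 hu4 h05 h0R; simpa [Nat.add_comm] using this
  have m5' : u5 + 1 ∈ XX := by
    have := key hV1 h02 h03 h04 hu5 h0R; simpa [Nat.add_comm] using this
  have m23 : u2 + u3 ∈ XX := by simpa using key h0V hu2 hu3 h04 h05 h0R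
  have m24 : u2 + u4 ∈ XX := by simpa using key h0V hu2 h03 hu4 h05 h0R
  have m25 : u2 + u5 ∈ XX := by simpa using key h0V hu2 h03 h04 hu5 h0R
  have m34 : u3 + u4 ∈ XX := by simpa using key h0V h02 hu3 hu4 h05 h0R
  have m35 : u3 + u5 ∈ XX := by simpa using key h0V h02 hu3 h04 hu5 h0R
  have m45 : u4 + u5 ∈ XX := by simpa using key h0V h02 h03 hu4 hu5 h0R
  have m23' : u2 + u3 + 1 ∈ XX := by
    have := key hV1 hu2 hu3 h04 h05 h0R
    simpa [Nat.add_assoc, Nat.add_comm, Nat.add_left_comm] using this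
  have m24' : u2 + u4 + 1 ∈ XX := by
    have := key hV1 hu2 h03 hu4 h05 h0R
    simpa [Nat.add_assoc, Nat.add_comm, Nat.add_left_comm] using this
  have m25' : u2 + u5 + 1 ∈ XX := by
    have := key hV1 hu2 h03 h04 hu5 h0R
    simpa [Nat.add_assoc, Nat.add_comm, Nat.add_left_comm] using this
  have m34' : u3 + u4 + 1 ∈ XX := by
    have := key hV1 h02 hu3 hu4 h05 h0R
    simpa [Nat.add_assoc, Nat.add_comm, Nat.add_left_comm] using this
  have m35' : u3 + u5 + 1 ∈ XX := by
    have := key hV1 h02 hu3 h04 hu5 h0R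
    simpa [Nat.add_assoc, Nat.add_comm, Nat.add_left_comm] using this
  have m45' : u4 + u5 + 1 ∈ XX := by
    have := key hV1 h02 h03 hu4 hu5 h0R
    simpa [Nat.add_assoc, Nat.add_comm, Nat.add_left_comm] using this
  have m234 : u2 + u3 + u4 ∈ XX := by
    have := key h0V hu2 hu3 hu4 h05 h0R
    simpa [Nat.add_assoc, Nat.add_comm, Nat.add_left_comm] using this
  have m235 : u2 + u3 + u5 ∈ XX := by
    have := key h0V hu2 hu3 h04 hu5 h0R
    simpa [Nat.add_assoc, Nat.add_comm, Nat.add_left_comm] using this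
  have m245 : u2 + u4 + u5 ∈ XX := by
    have := key h0V hu2 h03 hu4 hu5 h0R
    simpa [Nat.add_assoc, Nat.add_comm, Nat.add_left_comm] using this
  have m345 : u3 + u4 + u5 ∈ XX := by
    have := key h0V h02 hu3 hu4 hu5 h0R
    simpa [Nat.add_assoc, Nat.add_comm, Nat.add_left_comm] using this
  have m234' : u2 + u3 + u4 + 1 ∈ XX := by
    have := key hV1 hu2 hu3 hu4 h05 h0R
    simpa [Nat.add_assoc, Nat.add_comm, Nat.add_left_comm] using this
  have m235' : u2 + u3 + u5 + 1 ∈ XX := by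
    have := key hV1 hu2 hu3 h04 hu5 h0R
    simpa [Nat.add_assoc, Nat.add_comm, Nat.add_left_comm] using this
  have m245' : u2 + u4 + u5 + 1 ∈ XX := by
    have := key hV1 hu2 h03 hu4 hu5 h0R
    simpa [Nat.add_assoc, Nat.add_comm, Nat.add_left_comm] using this
  have m345' : u3 + u4 + u5 + 1 ∈ XX := by
    have := key hV1 h02 hu3 hu4 hu5 h0R
    simpa [Nat.add_assoc, Nat.add_comm, Nat.add_left_comm] using this
  exact core u2 (memY m2 m2' hu2n) u3 (memY m3 m3' hu3n) u4 (memY m4 m4' hu4n)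
    u5 (memY m5 m5' hu5n)
    ⟨m23, m23', m24, m24', m34, m34', m234, m234', m25, m35, m45,
      m235, m235', m245, m245', m345, m345'⟩

theorem lengthSet_example :
    LengthSet ({0, 1, 4, 5, 10, 11, 12, 14, 15, 16, 19, 20, 21, 22, 25, 26, 29, 30} :
      Finset ℕ) = {2, 3, 4} := by
  show LengthSet XX = {2, 3, 4}
  ext n
  simp only [Set.mem_insert_iff, Set.mem_singleton_iff]
  constructor
  · rintro ⟨l, hcard, hat, hsum⟩
    by_contra hcon
    push_neg at hcon
    obtain ⟨h2, h3, h4⟩ := hcon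
    -- n = 0 impossible
    have hn0 : n ≠ 0 := by
      rintro rfl
      rw [Multiset.card_eq_zero] at hcard
      subst hcard
      simp only [Multiset.sum_zero] at hsum
      exact absurd hsum (by decide)
    -- n = 1 impossible
    have hn1 : n ≠ 1 := by
      rintro rfl
      rw [Multiset.card_eq_one] at hcard
      obtain ⟨U, rfl⟩ := hcard
      simp only [Multiset.sum_singleton] at hsum
      have hU : IsAtomP XX := hsum ▸ hat U (by simp)
      have := hU.2.2 {0, 10, 11} {0, 1, 4, 5, 10, 11, 15, 19}
        (by decide) (by decide) (by decide)
      rcases this with h | h <;> exact absurd h (by decide)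
    have : 5 ≤ n := by omega
    exact not_ge5 l hat hsum (hcard ▸ this)
  · rintro (rfl | rfl | rfl)
    · refine ⟨{({0, 10, 11} : Finset ℕ), {0, 1, 4, 5, 10, 11, 15, 19}}, by decide, ?_, by decide⟩
      intro U hU
      simp only [Multiset.insert_eq_cons, Multiset.mem_cons, Multiset.mem_singleton] at hU
      rcases hU with rfl | rfl
      · exact atom1011
      · exact atomA
    · refine ⟨{({0, 1} : Finset ℕ), {0, 10}, {0, 4, 10, 11, 15, 19}}, by decide, ?_, by decide⟩
      intro U hU
      simp only [Multiset.insert_eq_cons, Multiset.mem_cons, Multiset.mem_singleton] at hU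
      rcases hU with rfl | rfl | rfl
      · exact atom1
      · exact atom10
      · exact atomB
    · refine ⟨{({0, 1} : Finset ℕ), {0, 4}, {0, 10}, {0, 11, 15}}, by decide, ?_, by decide⟩
      intro U hU
      simp only [Multiset.insert_eq_cons, Multiset.mem_cons, Multiset.mem_singleton] at hU
      rcases hU with rfl | rfl | rfl | rfl
      · exact atom1
      · exact atom4
      · exact atom10
      · exact atom1115
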